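/- Consider a deep LSTM with L ≥ 1 layers: layer l (for l = 1,…,L) has n_c^{(l)} units, weights W_f^{(l)}, W_i^{(l)}, W_z^{(l)}, W_r^{(l)} (of size n_c^{(l)} × n_u for l = 1 and n_c^{(l)} × n_c^{(l−1)} for l > 1), U_f^{(l)}, U_i^{(l)}, U_z^{(l)}, U_r^{(l)} ∈ ℝ^{n_c^{(l)}×n_c^{(l)}}, biases b_f^{(l)}, b_i^{(l)}, b_z^{(l)}, b_r^{(l)} ∈ ℝ^{n_c^{(l)}}, and state update c⁺^{(l)} = f^{(l)}∘c^{(l)} + i^{(l)}∘r^{(l)}, h⁺^{(l)} = z^{(l)}∘φ(c⁺^{(l)}), where the gates f^{(l)}, i^{(l)}, z^{(l)} are σ and r^{(l)} is φ of W_*^{(l)} u^{(l)} + U_*^{(l)} h^{(l)} + b_*^{(l)}, the input of layer 1 is u^{(1)} = u, and the input of layer l ≥ 2 is u^{(l)} = h⁺^{(l−1)}. For each layer define σ̄_f^{(l)}, σ̄_i^{(l)}, φ̄_r^{(l)} as σ (resp. tanh) of the maximum row ℓ¹ norm of the augmented matrices [W_*^{(l)} U_*^{(l)} b_*^{(l)}],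 and set c̄^{(l)} = σ̄_i^{(l)} φ̄_r^{(l)}/(1−σ̄_f^{(l)}) and h̄^{(l)} = tanh(c̄^{(l)}). Then the set 𝒳 = ∏_{l=1}^L { (c,h) : ‖c‖∞ ≤ c̄^{(l)}, ‖h‖∞ ≤ h̄^{(l)} } is an invariant set: for every input u with ‖u‖∞ ≤ 1, if the full state lies in 𝒳 then the updated full state lies in 𝒳. -/

import Mathlib

/-- The sigmoid activation function `σ(x) = 1/(1+e^{-x})`. -/
noncomputable def sigm (x : ℝ) : ℝ := 1 / (1 + Real.exp (-x))

/-- The maximum over rows of the ℓ¹ norm of the rows of the augmented matrix `[W U b]`. -/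
noncomputable def augRowMax {n m p : ℕ} (W : Matrix (Fin n) (Fin m) ℝ)
    (U : Matrix (Fin n) (Fin p) ℝ) (b : Fin n → ℝ) : ℝ :=
  ⨆ j, (∑ i, |W j i| + ∑ i, |U j i| + |b j|)

/-- Input dimension of layer `l` of a deep LSTM: `n_u` for the first layer,
`n_c^{(l-1)}` for the following ones. -/
def nIn (nu : ℕ) (nc : ℕ → ℕ) : ℕ → ℕ
  | 0 => nu
  | l + 1 => nc l

/-
In the cell update `c⁺ = f ∘ c + i ∘ r` the gates satisfy `0 < f ≤ σ̄_f`, `0 < i ≤ σ̄_i` and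
`|r| ≤ φ̄_r` componentwise, because for inputs and hidden states of max-norm at most `1` every
pre-activation is bounded row by row by the ℓ¹ norm of the augmented matrix `[W U b]`. Hence
`‖c⁺‖∞ ≤ σ̄_f ‖c‖∞ + σ̄_i φ̄_r`, and `c̄` is exactly the fixed point of this affine map, so
`‖c‖∞ ≤ c̄` is preserved; then `‖h⁺‖∞ ≤ tanh c̄ = h̄ < 1`. Since `h̄ < 1`, each layer passes an
input of max-norm at most `1` to the next one, and induction over the layers concludes.
-/

open Real Matrix

lemma sigm_eq_sigmoid : sigm = sigmoid := funext fun _ => one_div _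

namespace Real

lemma tanh_mem_Ioo (x : ℝ) : tanh x ∈ Set.Ioo (-1) 1 := ⟨neg_one_lt_tanh x, tanh_lt_one x⟩

lemma tanh_monotone : Monotone tanh := fun x y hxy => by
  rwa [← artanh_le_artanh_iff (tanh_mem_Ioo x) (tanh_mem_Ioo y), artanh_tanh, artanh_tanh]

lemma tanh_nonneg {x : ℝ} (hx : 0 ≤ x) : 0 ≤ tanh x := tanh_zero ▸ tanh_monotone hx

lemma abs_tanh (x : ℝ) : |tanh x| = tanh |x| := by
  rcases le_total 0 x with hx | hx
  · rw [abs_of_nonneg hx, abs_of_nonneg (tanh_nonneg hx)]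
  · rw [abs_of_nonpos hx, tanh_neg, abs_of_nonpos (by simpa using tanh_nonneg (neg_nonneg.2 hx))]

end Real

lemma abs_mulVec_apply_le_of_norm_le_one {ι κ : Type*} [Fintype κ] (W : Matrix ι κ ℝ)
    {x : κ → ℝ} (hx : ‖x‖ ≤ 1) (j : ι) : |(W *ᵥ x) j| ≤ ∑ i, |W j i| :=
  calc |∑ i, W j i * x i| ≤ ∑ i, |W j i * x i| := Finset.abs_sum_le_sum_abs _ _
    _ = ∑ i, |W j i| * |x i| := by simp_rw [abs_mul]
    _ ≤ ∑ i, |W j i| := Finset.sum_le_sum fun i _ =>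
        mul_le_of_le_one_right (abs_nonneg _) ((norm_le_pi_norm x i).trans hx)

lemma le_augRowMax {n m p : ℕ} (W : Matrix (Fin n) (Fin m) ℝ) (U : Matrix (Fin n) (Fin p) ℝ)
    (b : Fin n → ℝ) (j : Fin n) : ∑ i, |W j i| + ∑ i, |U j i| + |b j| ≤ augRowMax W U b :=
  le_ciSup (f := fun j => ∑ i, |W j i| + ∑ i, |U j i| + |b j|) (Set.finite_range _).bddAbove j

lemma abs_preactivation_le_augRowMax {n m p : ℕ} (W : Matrix (Fin n) (Fin m) ℝ)
    (U : Matrix (Fin n) (Fin p) ℝ) (b : Fin n → ℝ) {x : Fin m → ℝ} {h : Fin p → ℝ}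
    (hx : ‖x‖ ≤ 1) (hh : ‖h‖ ≤ 1) (j : Fin n) : |(W *ᵥ x + U *ᵥ h + b) j| ≤ augRowMax W U b :=
  calc |(W *ᵥ x) j + (U *ᵥ h) j + b j| ≤ |(W *ᵥ x) j| + |(U *ᵥ h) j| + |b j| := abs_add_three _ _ _
    _ ≤ ∑ i, |W j i| + ∑ i, |U j i| + |b j| := by
        gcongr
        exacts [abs_mulVec_apply_le_of_norm_le_one W hx j, abs_mulVec_apply_le_of_norm_le_one U hh j]
    _ ≤ augRowMax W U b := le_augRowMax W U b j

lemma abs_mul_add_mul_le_div_one_sub {f i c r F I R : ℝ} (hf₀ : 0 ≤ f) (hf : f ≤ F) (hF : F < 1)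
    (hi₀ : 0 ≤ i) (hi : i ≤ I) (hr : |r| ≤ R) (hc : |c| ≤ I * R / (1 - F)) :
    |f * c + i * r| ≤ I * R / (1 - F) := by
  set C := I * R / (1 - F)
  have hC : F * C + I * R = C := by simp only [C]; field_simp [(sub_pos.2 hF).ne']; ring
  have hC₀ : 0 ≤ C := (abs_nonneg c).trans hc
  calc |f * c + i * r| ≤ f * |c| + i * |r| := by
        simpa only [abs_mul, abs_of_nonneg hf₀, abs_of_nonneg hi₀] using abs_add_le (f * c) (i * r)
    _ ≤ F * C + I * R := add_le_add (mul_le_mul hf hc (abs_nonneg c) (hf₀.trans hf))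
        (mul_le_mul hi hr (abs_nonneg r) (hi₀.trans hi))
    _ = C := hC

section Layer

variable {n m : ℕ} (Wf Wi Wr : Matrix (Fin n) (Fin m) ℝ) (Uf Ui Ur : Matrix (Fin n) (Fin n) ℝ)
  (bf bi br : Fin n → ℝ)

lemma norm_cellUpdate_le {x : Fin m → ℝ} {h c : Fin n → ℝ} (hx : ‖x‖ ≤ 1) (hh : ‖h‖ ≤ 1)
    (hc : ‖c‖ ≤ sigm (augRowMax Wi Ui bi) * tanh (augRowMax Wr Ur br) /
      (1 - sigm (augRowMax Wf Uf bf))) :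
    ‖fun j => sigm ((Wf *ᵥ x + Uf *ᵥ h + bf) j) * c j +
      sigm ((Wi *ᵥ x + Ui *ᵥ h + bi) j) * tanh ((Wr *ᵥ x + Ur *ᵥ h + br) j)‖ ≤
      sigm (augRowMax Wi Ui bi) * tanh (augRowMax Wr Ur br) / (1 - sigm (augRowMax Wf Uf bf)) := by
  refine pi_norm_le_iff_of_nonneg ((norm_nonneg c).trans hc) |>.2 fun j => ?_
  have gate_le {W : Matrix (Fin n) (Fin m) ℝ} {U : Matrix (Fin n) (Fin n) ℝ} {b : Fin n → ℝ} :
      sigm ((W *ᵥ x + U *ᵥ h + b) j) ≤ sigm (augRowMax W U b) := by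
    rw [sigm_eq_sigmoid]
    exact sigmoid_le ((le_abs_self _).trans (abs_preactivation_le_augRowMax W U b hx hh j))
  rw [Real.norm_eq_abs]
  refine abs_mul_add_mul_le_div_one_sub (sigm_eq_sigmoid ▸ sigmoid_nonneg _) gate_le
    (sigm_eq_sigmoid ▸ sigmoid_lt_one _) (sigm_eq_sigmoid ▸ sigmoid_nonneg _) gate_le ?_
    ((norm_le_pi_norm c j).trans hc)
  rw [abs_tanh]
  exact tanh_monotone (abs_preactivation_le_augRowMax Wr Ur br hx hh j)

end Layer

lemma norm_sigm_mul_tanh_le {ι : Type*} [Fintype ι] (z c : ι → ℝ) {C : ℝ} (hc : ‖c‖ ≤ C) :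
    ‖fun j => sigm (z j) * tanh (c j)‖ ≤ tanh C := by
  refine pi_norm_le_iff_of_nonneg (tanh_nonneg ((norm_nonneg c).trans hc)) |>.2 fun j => ?_
  rw [Real.norm_eq_abs, abs_mul, abs_tanh, sigm_eq_sigmoid, abs_of_nonneg (sigmoid_nonneg _)]
  exact (mul_le_of_le_one_left (tanh_nonneg (abs_nonneg _)) (sigmoid_le_one _)).trans
    (tanh_monotone ((norm_le_pi_norm c j).trans hc))

theorem stmt_5_general (L : ℕ) (nu : ℕ) (nc : ℕ → ℕ)
    (Wf Wi Wz Wr : (l : ℕ) → Matrix (Fin (nc l)) (Fin (nIn nu nc l)) ℝ)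
    (Uf Ui Uz Ur : (l : ℕ) → Matrix (Fin (nc l)) (Fin (nc l)) ℝ)
    (bf bi bz br : (l : ℕ) → Fin (nc l) → ℝ)
    (σf σi φr cbar hbar : ℕ → ℝ)
    (hσf : ∀ l, σf l = sigm (augRowMax (Wf l) (Uf l) (bf l)))
    (hσi : ∀ l, σi l = sigm (augRowMax (Wi l) (Ui l) (bi l)))
    (hφr : ∀ l, φr l = Real.tanh (augRowMax (Wr l) (Ur l) (br l)))
    (hcbar : ∀ l, cbar l = σi l * φr l / (1 - σf l))
    (hhbar : ∀ l, hbar l = Real.tanh (cbar l))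
    -- the input, the current state, and the updated state
    (u : Fin nu → ℝ) (hu : ‖u‖ ≤ 1)
    (c h cplus hplus : (l : ℕ) → Fin (nc l) → ℝ)
    -- the input of each layer: `u` for layer 0, the updated hidden state of the
    -- preceding layer otherwise
    (uIn : (l : ℕ) → Fin (nIn nu nc l) → ℝ)
    (huIn0 : uIn 0 = u)
    (huInSucc : ∀ l, uIn (l + 1) = hplus l)
    -- the LSTM state update equations of each layer
    (hcplus : ∀ l < L, cplus l = fun j =>
      sigm ((Matrix.mulVec (Wf l) (uIn l) + Matrix.mulVec (Uf l) (h l) + bf l) j) * c l j +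
      sigm ((Matrix.mulVec (Wi l) (uIn l) + Matrix.mulVec (Ui l) (h l) + bi l) j) *
        Real.tanh ((Matrix.mulVec (Wr l) (uIn l) + Matrix.mulVec (Ur l) (h l) + br l) j))
    (hhplus : ∀ l < L, hplus l = fun j =>
      sigm ((Matrix.mulVec (Wz l) (uIn l) + Matrix.mulVec (Uz l) (h l) + bz l) j) *
        Real.tanh (cplus l j))
    -- the current state lies in the invariant set 𝒳
    (hstate : ∀ l < L, ‖c l‖ ≤ cbar l ∧ ‖h l‖ ≤ hbar l) :
    -- then the updated state lies in 𝒳 as well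
    ∀ l < L, ‖cplus l‖ ≤ cbar l ∧ ‖hplus l‖ ≤ hbar l := by
  have hbar_le_one : ∀ l, hbar l ≤ 1 := fun l => hhbar l ▸ (tanh_lt_one _).le
  have layer : ∀ l < L, ‖uIn l‖ ≤ 1 → ‖cplus l‖ ≤ cbar l ∧ ‖hplus l‖ ≤ hbar l := by
    intro l hl hin
    obtain ⟨hc, hh⟩ := hstate l hl
    have hcp : ‖cplus l‖ ≤ cbar l := by
      rw [hcbar, hσi, hφr, hσf] at hc ⊢
      rw [hcplus l hl]
      exact norm_cellUpdate_le _ _ _ _ _ _ _ _ _ hin (hh.trans (hbar_le_one l)) hc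
    refine ⟨hcp, ?_⟩
    rw [hhplus l hl, hhbar]
    exact norm_sigm_mul_tanh_le _ _ hcp
  have input : ∀ l < L, ‖uIn l‖ ≤ 1 := by
    intro l
    induction l with
    | zero => exact fun _ => huIn0 ▸ hu
    | succ k ih =>
      intro hl
      rw [huInSucc k]
      exact (layer k (by omega) (ih (by omega))).2.trans (hbar_le_one k)
  exact fun l hl => layer l hl (input l hl)

/-- Proposition 2: the set `𝒳 = ∏_l { (c,h) : ‖c‖∞ ≤ c̄^{(l)}, ‖h‖∞ ≤ h̄^{(l)} }` is an
invariant set of the deep LSTM: for any input `u` with `‖u‖∞ ≤ 1`, if the full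
state `(c^{(l)}, h^{(l)})_{l<L}` lies in `𝒳`, then the updated full state
`(c⁺^{(l)}, h⁺^{(l)})_{l<L}` lies in `𝒳`.  Layer `l+1` is fed the updated hidden
state `h⁺^{(l)}` of the previous layer. -/
theorem stmt_5 (L : ℕ) (hL : 1 ≤ L) (nu : ℕ) (nc : ℕ → ℕ)
    (Wf Wi Wz Wr : (l : ℕ) → Matrix (Fin (nc l)) (Fin (nIn nu nc l)) ℝ)
    (Uf Ui Uz Ur : (l : ℕ) → Matrix (Fin (nc l)) (Fin (nc l)) ℝ)
    (bf bi bz br : (l : ℕ) → Fin (nc l) → ℝ)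
    (σf σi φr cbar hbar : ℕ → ℝ)
    (hσf : ∀ l, σf l = sigm (augRowMax (Wf l) (Uf l) (bf l)))
    (hσi : ∀ l, σi l = sigm (augRowMax (Wi l) (Ui l) (bi l)))
    (hφr : ∀ l, φr l = Real.tanh (augRowMax (Wr l) (Ur l) (br l)))
    (hcbar : ∀ l, cbar l = σi l * φr l / (1 - σf l))
    (hhbar : ∀ l, hbar l = Real.tanh (cbar l))
    -- the input, the current state, and the updated state
    (u : Fin nu → ℝ) (hu : ‖u‖ ≤ 1)
    (c h cplus hplus : (l : ℕ) → Fin (nc l) → ℝ)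
    -- the input of each layer: `u` for layer 0, the updated hidden state of the
    -- preceding layer otherwise
    (uIn : (l : ℕ) → Fin (nIn nu nc l) → ℝ)
    (huIn0 : uIn 0 = u)
    (huInSucc : ∀ l, uIn (l + 1) = hplus l)
    -- the LSTM state update equations of each layer
    (hcplus : ∀ l < L, cplus l = fun j =>
      sigm ((Matrix.mulVec (Wf l) (uIn l) + Matrix.mulVec (Uf l) (h l) + bf l) j) * c l j +
      sigm ((Matrix.mulVec (Wi l) (uIn l) + Matrix.mulVec (Ui l) (h l) + bi l) j) *
        Real.tanh ((Matrix.mulVec (Wr l) (uIn l) + Matrix.mulVec (Ur l) (h l) + br l) j))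
    (hhplus : ∀ l < L, hplus l = fun j =>
      sigm ((Matrix.mulVec (Wz l) (uIn l) + Matrix.mulVec (Uz l) (h l) + bz l) j) *
        Real.tanh (cplus l j))
    -- the current state lies in the invariant set 𝒳
    (hstate : ∀ l < L, ‖c l‖ ≤ cbar l ∧ ‖h l‖ ≤ hbar l) :
    -- then the updated state lies in 𝒳 as well
    ∀ l < L, ‖cplus l‖ ≤ cbar l ∧ ‖hplus l‖ ≤ hbar l :=
  stmt_5_general L nu nc Wf Wi Wz Wr Uf Ui Uz Ur bf bi bz br σf σi φr cbar hbar hσf hσi hφr hcbar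
    hhbar u hu c h cplus hplus uIn huIn0 huInSucc hcplus hhplus hstate
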